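/- Let h₀ ∈ (0,1) and let δ : (0,h₀) → (0,∞) be such that for every h ∈ (0,h₀) one has 1/4 + δ(h)·tan(arctan(1/(2δ(h))) + δ(h)·log h) − δ(h)² = 0 with arctan(1/(2δ(h))) + δ(h)·log h ∈ (−π/2, π/2), and suppose δ(h) → 0 as h → 0⁺. Then δ(h)·(6 + |log h|) → π as h → 0⁺; that is, δ(h) = π/(6 + |log h|) + o(1/|log h|). -/

import Mathlib

open MeasureTheory Real Set Filter

noncomputable section

open Topology

/-! Solving the equation for the angle gives
`δ log h = arctan ((δ² - 1/4)/δ) - arctan (1/(2δ))`. As `δ → 0⁺` the two arguments tend to `-∞`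
and `+∞`, so `δ log h → -π/2 - π/2 = -π`, while `6δ → 0`; since `|log h| = -log h` for `h < 1`
this is the claim. -/

lemma eq_arctan_of_quarter_add_mul_tan_sub_sq_eq_zero {δ θ : ℝ} (hδ : δ ≠ 0)
    (hθ : θ ∈ Ioo (-(π / 2)) (π / 2)) (h : 1 / 4 + δ * tan θ - δ ^ 2 = 0) :
    θ = arctan ((δ ^ 2 - 1 / 4) / δ) := by
  have htan : tan θ = (δ ^ 2 - 1 / 4) / δ := by
    field_simp
    linarith
  rw [← htan, arctan_tan hθ.1 hθ.2]

lemma tendsto_sq_sub_div_self_nhdsGT_zero_atBot {c : ℝ} (hc : 0 < c) :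
    Tendsto (fun x : ℝ => (x ^ 2 - c) / x) (𝓝[>] 0) atBot := by
  have hsplit : (fun x : ℝ => x + -(c * x⁻¹)) =ᶠ[𝓝[>] 0] fun x => (x ^ 2 - c) / x := by
    filter_upwards [self_mem_nhdsWithin] with x hx
    field_simp [(mem_Ioi.mp hx).ne']
    ring
  have hbounded : ∀ᶠ x : ℝ in 𝓝[>] 0, x ≤ 1 :=
    nhdsWithin_le_nhds (eventually_le_nhds zero_lt_one)
  refine (tendsto_atBot_add_left_of_ge' _ 1 hbounded ?_).congr' hsplit
  exact tendsto_neg_atBot_iff.mpr (tendsto_inv_nhdsGT_zero.const_mul_atTop hc)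

lemma tendsto_arctan_sub_arctan_nhdsGT_zero :
    Tendsto (fun x : ℝ => arctan ((x ^ 2 - 1 / 4) / x) - arctan (1 / (2 * x)))
      (𝓝[>] 0) (𝓝 (-π)) := by
  have hneg : Tendsto (fun x : ℝ => arctan ((x ^ 2 - 1 / 4) / x)) (𝓝[>] 0) (𝓝 (-(π / 2))) :=
    (tendsto_arctan_atBot.mono_right nhdsWithin_le_nhds).comp
      (tendsto_sq_sub_div_self_nhdsGT_zero_atBot (by norm_num))
  have hinv : Tendsto (fun x : ℝ => 1 / (2 * x)) (𝓝[>] 0) atTop := by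
    simpa only [one_div, mul_inv] using tendsto_inv_nhdsGT_zero.const_mul_atTop (by norm_num)
  have hpos : Tendsto (fun x : ℝ => arctan (1 / (2 * x))) (𝓝[>] 0) (𝓝 (π / 2)) :=
    (tendsto_arctan_atTop.mono_right nhdsWithin_le_nhds).comp hinv
  convert hneg.sub hpos using 2
  ring

theorem delta_h_asymptotics (h₀ : ℝ) (hh₀ : h₀ ∈ Set.Ioo (0:ℝ) 1) (δ : ℝ → ℝ)
    (hpos : ∀ h ∈ Set.Ioo (0:ℝ) h₀, 0 < δ h)
    (hang : ∀ h ∈ Set.Ioo (0:ℝ) h₀,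
      Real.arctan (1 / (2 * δ h)) + δ h * Real.log h ∈ Set.Ioo (-(π/2)) (π/2))
    (heq : ∀ h ∈ Set.Ioo (0:ℝ) h₀,
      1/4 + δ h * Real.tan (Real.arctan (1 / (2 * δ h)) + δ h * Real.log h) - (δ h) ^ 2 = 0)
    (hlim : Filter.Tendsto δ (nhdsWithin 0 (Set.Ioo 0 h₀)) (nhds 0)) :
    Filter.Tendsto (fun h => δ h * (6 + |Real.log h|))
      (nhdsWithin 0 (Set.Ioo 0 h₀)) (nhds π) := by
  have hδ : Tendsto δ (𝓝[Ioo 0 h₀] 0) (𝓝[>] 0) :=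
    tendsto_nhdsWithin_of_tendsto_nhds_of_eventually_within _ hlim
      (eventually_nhdsWithin_of_forall hpos)
  have hlog : Tendsto (fun h => δ h * log h) (𝓝[Ioo 0 h₀] 0) (𝓝 (-π)) := by
    refine (tendsto_arctan_sub_arctan_nhdsGT_zero.comp hδ).congr' ?_
    filter_upwards [self_mem_nhdsWithin] with h hh
    have hθ := eq_arctan_of_quarter_add_mul_tan_sub_sq_eq_zero (hpos h hh).ne' (hang h hh) (heq h hh)
    simp only [Function.comp_apply]
    linarith
  have hsum : Tendsto (fun h => 6 * δ h - δ h * log h) (𝓝[Ioo 0 h₀] 0) (𝓝 π) := by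
    simpa using (hlim.const_mul 6).sub hlog
  refine hsum.congr' ?_
  filter_upwards [self_mem_nhdsWithin] with h hh
  rw [abs_of_neg (log_neg hh.1 (hh.2.trans hh₀.2))]
  ring
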